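/- (Strong local minimality characterization via second subderivative) Let f : ℝⁿ → ℝ ∪ {+∞} be proper and x̄ ∈ dom f. Then 0 ∈ ∂f(x̄) together with d²f(x̄|0)(w) > 0 for all w ≠ 0 holds if and only if x̄ is a strong local minimizer of f, i.e., there exist a neighborhood U of x̄ and γ > 0 with f(x) ≥ f(x̄) + γ‖x − x̄‖² for all x ∈ U ∩ dom f. -/
import Mathlib


open Matrix Set Filter

noncomputable section

abbrev V (n : ℕ) := Fin n → ℝ

/-- Fréchet (regular) subdifferential of an extended-real-valued function. -/
def fsub {n : ℕ} (f : V n → EReal) (xbar : V n) : Set (V n) :=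
  {v | 0 ≤ Filter.liminf
      (fun x => ((‖x - xbar‖⁻¹ : ℝ) : EReal)
        * (f x - f xbar - ((v ⬝ᵥ (x - xbar) : ℝ) : EReal)))
      (nhdsWithin xbar {xbar}ᶜ)}

/-- Limiting (Mordukhovich) subdifferential: limits of Fréchet subgradients
along `f`-attentive convergent sequences. -/
def lsub {n : ℕ} (f : V n → EReal) (xbar : V n) : Set (V n) :=
  {v | ∃ x : ℕ → V n, ∃ w : ℕ → V n,
    Tendsto x atTop (nhds xbar) ∧
    Tendsto (fun k => f (x k)) atTop (nhds (f xbar)) ∧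
    (∀ k, w k ∈ fsub f (x k)) ∧
    Tendsto w atTop (nhds v)}

/-- Second subderivative `d²f(xbar | v)(w)`. -/
def ssub {n : ℕ} (f : V n → EReal) (xbar v w : V n) : EReal :=
  Filter.liminf
    (fun p : ℝ × V n =>
      (((2 / p.1 ^ 2) : ℝ) : EReal)
        * (f (xbar + p.1 • p.2) - f xbar - ((p.1 * (v ⬝ᵥ p.2) : ℝ) : EReal)))
    ((nhdsWithin 0 (Set.Ioi 0)) ×ˢ nhds w)

/-- `0 ∈ ∂f(xbar)` together with positivity of the second subderivative
`d²f(xbar|0)` on nonzero directions is equivalent to `xbar` being a strong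
local minimizer of `f`. -/
theorem stmt19 {n : ℕ} (f : V n → EReal)
    (hproper : (∃ x, f x < ⊤) ∧ ∀ x, f x ≠ ⊥)
    (xbar : V n) (hxbar : f xbar < ⊤) :
    ((0 ∈ lsub f xbar) ∧ ∀ w : V n, w ≠ 0 → 0 < ssub f xbar 0 w) ↔
    ∃ U ∈ nhds xbar, ∃ γ : ℝ, 0 < γ ∧
      ∀ x ∈ U, f x < ⊤ →
        f xbar + ((γ * ‖x - xbar‖ ^ 2 : ℝ) : EReal) ≤ f x := by
  have hbne : f xbar ≠ ⊥ := hproper.2 xbar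
  have hbnt : f xbar ≠ ⊤ := ne_of_lt hxbar
  set b : ℝ := (f xbar).toReal with hbdef
  have hb : f xbar = (b : EReal) := (EReal.coe_toReal hbnt hbne).symm
  constructor
  · rintro ⟨-, hpos⟩
    by_contra hcon
    push_neg at hcon
    have H : ∀ k : ℕ, ∃ x, x ∈ Metric.ball xbar (1 / (k + 1 : ℝ)) ∧ f x < ⊤ ∧
        f x < f xbar + ((1 / (k + 1 : ℝ) * ‖x - xbar‖ ^ 2 : ℝ) : EReal) := by
      intro k
      obtain ⟨x, hx1, hx2, hx3⟩ := hcon (Metric.ball xbar (1 / (k + 1 : ℝ)))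
        (Metric.ball_mem_nhds xbar (by positivity)) (1 / (k + 1 : ℝ)) (by positivity)
      exact ⟨x, hx1, hx2, hx3⟩
    choose x hx1 hx2 hx3 using H
    have hne : ∀ k, x k ≠ xbar := by
      intro k hk
      have := hx3 k
      rw [hk] at this
      simp at this
    set t : ℕ → ℝ := fun k => ‖x k - xbar‖ with htdef
    have htpos : ∀ k, 0 < t k := fun k =>
      norm_pos_iff.mpr (sub_ne_zero.mpr (hne k))
    have htlt : ∀ k, t k < 1 / (k + 1 : ℝ) := by
      intro k
      have := hx1 k
      rwa [Metric.mem_ball, dist_eq_norm] at this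
    set wk : ℕ → V n := fun k => (t k)⁻¹ • (x k - xbar) with hwkdef
    have hwknorm : ∀ k, wk k ∈ Metric.sphere (0 : V n) 1 := by
      intro k
      simp only [hwkdef, Metric.mem_sphere, dist_zero_right, norm_smul,
        norm_inv, Real.norm_eq_abs, abs_of_pos (htpos k)]
      exact inv_mul_cancel₀ (ne_of_gt (htpos k))
    obtain ⟨w, hwsph, φ, hφ, hconv⟩ :=
      (isCompact_sphere (0 : V n) 1).tendsto_subseq hwknorm
    have hwn : ‖w‖ = 1 := by simpa [dist_zero_right] using hwsph
    have hw0 : w ≠ 0 := by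
      intro h; rw [h, norm_zero] at hwn; norm_num at hwn
    have ht0 : Tendsto t atTop (nhds 0) := by
      apply squeeze_zero (fun k => (htpos k).le) (fun k => (htlt k).le)
      exact tendsto_one_div_add_atTop_nhds_zero_nat
    set p : ℕ → ℝ × V n := fun k => (t (φ k), wk (φ k)) with hpdef
    have htend : Tendsto p atTop ((nhdsWithin 0 (Set.Ioi 0)) ×ˢ nhds w) := by
      apply Filter.Tendsto.prodMk
      · apply tendsto_nhdsWithin_of_tendsto_nhds_of_eventually_within
        · exact ht0.comp hφ.tendsto_atTop
        · exact Eventually.of_forall fun k => htpos (φ k)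
      · exact hconv
    set u : ℝ × V n → EReal := fun p =>
      (((2 / p.1 ^ 2) : ℝ) : EReal)
        * (f (xbar + p.1 • p.2) - f xbar - ((p.1 * ((0 : V n) ⬝ᵥ p.2) : ℝ) : EReal))
      with hudef
    have hub : ∀ k, u (p k) ≤ ((2 / (k + 1 : ℝ) : ℝ) : EReal) := by
      intro k
      set j := φ k with hjdef
      have hjknat : k ≤ j := hφ.le_apply
      have hjk : (k : ℝ) + 1 ≤ (j : ℝ) + 1 := by
        have := (Nat.cast_le (α := ℝ)).mpr hjknat
        linarith
      have hxj : xbar + (t j) • (wk j) = x j := by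
        rw [hwkdef]
        simp only []
        rw [smul_inv_smul₀ (ne_of_gt (htpos j))]
        abel
      have hfxb : f (x j) ≠ ⊥ := hproper.2 _
      set a : ℝ := (f (x j)).toReal with hadef
      have ha : f (x j) = (a : EReal) := (EReal.coe_toReal (ne_of_lt (hx2 j)) hfxb).symm
      have hlt : a < b + 1 / (j + 1 : ℝ) * t j ^ 2 := by
        have := hx3 j
        rw [ha, hb, ← EReal.coe_add, EReal.coe_lt_coe_iff] at this
        exact this
      have hval : u (p k) = ((2 / t j ^ 2 * (a - b) : ℝ) : EReal) := by
        simp only [hudef, hpdef, ← hjdef]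
        rw [hxj, zero_dotProduct, mul_zero, EReal.coe_zero, sub_zero,
          ha, hb, ← EReal.coe_sub, ← EReal.coe_mul]
      rw [hval, EReal.coe_le_coe_iff]
      have ht2 : (0 : ℝ) < t j ^ 2 := pow_pos (htpos j) 2
      have hj1 : (0 : ℝ) < (j : ℝ) + 1 := by positivity
      have hk1 : (0 : ℝ) < (k : ℝ) + 1 := by positivity
      have h1 : 2 / t j ^ 2 * (a - b) ≤ 2 / (j + 1 : ℝ) := by
        rw [div_mul_eq_mul_div, div_le_div_iff₀ ht2 hj1]
        have : a - b < 1 / (j + 1 : ℝ) * t j ^ 2 := by linarith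
        calc 2 * (a - b) * ((j : ℝ) + 1) ≤ 2 * (1 / (j + 1 : ℝ) * t j ^ 2) * ((j : ℝ) + 1) := by
              nlinarith
          _ = 2 * t j ^ 2 := by field_simp
      have h2 : 2 / ((j : ℝ) + 1) ≤ 2 / ((k : ℝ) + 1) := by
        apply div_le_div_of_nonneg_left (by norm_num) hk1 hjk
      linarith
    have hseq : Filter.liminf (fun k => u (p k)) atTop ≤ 0 := by
      have hbound : Filter.liminf (fun k => u (p k)) atTop ≤
          Filter.liminf (fun k : ℕ => ((2 / (k + 1 : ℝ) : ℝ) : EReal)) atTop :=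
        Filter.liminf_le_liminf (Eventually.of_forall hub)
      have hlim : Tendsto (fun k : ℕ => ((2 / (k + 1 : ℝ) : ℝ) : EReal)) atTop (nhds 0) := by
        rw [show ((0 : EReal)) = ((0 : ℝ) : EReal) by simp]
        rw [EReal.tendsto_coe]
        have : (fun k : ℕ => 2 / (k + 1 : ℝ)) = fun k : ℕ => 2 * (1 / (k + 1 : ℝ)) := by
          funext k; ring
        rw [this, show (0 : ℝ) = 2 * 0 by ring]
        exact tendsto_one_div_add_atTop_nhds_zero_nat.const_mul 2
      rw [hlim.liminf_eq] at hbound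
      exact hbound
    have hmono : ssub f xbar 0 w ≤ Filter.liminf (fun k => u (p k)) atTop := by
      have h1 : ssub f xbar 0 w ≤ Filter.liminf u (Filter.map p atTop) :=
        Filter.liminf_le_liminf_of_le htend
      rw [← Filter.liminf_comp] at h1
      exact h1
    have := hpos w hw0
    have : (0 : EReal) < 0 := lt_of_lt_of_le this (hmono.trans hseq)
    exact lt_irrefl _ this
  · rintro ⟨U, hU, γ, hγ, hmin⟩
    constructor
    · -- 0 ∈ lsub via 0 ∈ fsub at xbar
      refine ⟨fun _ => xbar, fun _ => 0, tendsto_const_nhds, tendsto_const_nhds,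
        fun k => ?_, tendsto_const_nhds⟩
      have hU' : ∀ᶠ x in nhdsWithin xbar {xbar}ᶜ, x ∈ U :=
        eventually_nhdsWithin_of_eventually_nhds (eventually_of_mem hU fun _ h => h)
      have hev : ∀ᶠ x in nhdsWithin xbar {xbar}ᶜ, (0 : EReal) ≤
          ((‖x - xbar‖⁻¹ : ℝ) : EReal)
            * (f x - f xbar - (((0 : V n) ⬝ᵥ (x - xbar) : ℝ) : EReal)) := by
        filter_upwards [hU'] with x hxU
        have h1 : (0 : EReal) ≤ ((‖x - xbar‖⁻¹ : ℝ) : EReal) := by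
          rw [EReal.coe_nonneg]; positivity
        have h2 : (0 : EReal) ≤ f x - f xbar - (((0 : V n) ⬝ᵥ (x - xbar) : ℝ) : EReal) := by
          rw [zero_dotProduct, EReal.coe_zero, sub_zero]
          rcases lt_or_ge (f x) ⊤ with hfx | hfx
          · have hle := hmin x hxU hfx
            have hfxb : f x ≠ ⊥ := hproper.2 x
            set a : ℝ := (f x).toReal with hadef
            have ha : f x = (a : EReal) := (EReal.coe_toReal (ne_of_lt hfx) hfxb).symm
            rw [ha, hb, ← EReal.coe_sub, EReal.coe_nonneg]
            rw [hb, ha, ← EReal.coe_add, EReal.coe_le_coe_iff] at hle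
            nlinarith [sq_nonneg ‖x - xbar‖]
          · have : f x = ⊤ := top_le_iff.mp hfx
            rw [this, hb, EReal.top_sub_coe]
            exact le_top
        exact mul_nonneg h1 h2
      exact Filter.le_liminf_of_le (by isBoundedDefault) hev
    · -- positivity of the second subderivative
      intro w hw
      obtain ⟨ε, hε, hball⟩ := Metric.mem_nhds_iff.mp hU
      have hwn : (0 : ℝ) < ‖w‖ := norm_pos_iff.mpr hw
      set c : ℝ := γ * ‖w‖ ^ 2 / 2 with hcdef
      have hc : 0 < c := by positivity
      have key : ∀ᶠ p : ℝ × V n in (nhdsWithin 0 (Set.Ioi 0)) ×ˢ nhds w,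
          ((c : ℝ) : EReal) ≤ (((2 / p.1 ^ 2) : ℝ) : EReal)
            * (f (xbar + p.1 • p.2) - f xbar - ((p.1 * ((0 : V n) ⬝ᵥ p.2) : ℝ) : EReal)) := by
        have h1 : ∀ᶠ t : ℝ in nhdsWithin 0 (Set.Ioi 0),
            0 < t ∧ t < ε / (‖w‖ + 1) := by
          have : ∀ᶠ t : ℝ in nhdsWithin 0 (Set.Ioi 0), t < ε / (‖w‖ + 1) :=
            eventually_nhdsWithin_of_eventually_nhds
              (eventually_lt_nhds (by positivity))
          filter_upwards [self_mem_nhdsWithin, this] with t ht ht2 using ⟨ht, ht2⟩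
        have h2 : ∀ᶠ w' : V n in nhds w, ‖w'‖ < ‖w‖ + 1 ∧ ‖w‖ / 2 < ‖w'‖ := by
          have hcont : Tendsto (fun w' : V n => ‖w'‖) (nhds w) (nhds ‖w‖) :=
            (continuous_norm.tendsto w)
          filter_upwards [hcont.eventually (eventually_lt_nhds (show ‖w‖ < ‖w‖ + 1 by linarith)),
            hcont.eventually (eventually_gt_nhds (show ‖w‖ / 2 < ‖w‖ by linarith))] with w' hlt hgt
          exact ⟨hlt, hgt⟩
        filter_upwards [h1.prod_inl (nhds w), h2.prod_inr (nhdsWithin 0 (Set.Ioi 0))]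
          with p hp1 hp2
        obtain ⟨ht, htε⟩ := hp1
        obtain ⟨hw1, hw2⟩ := hp2
        set t := p.1
        set w' := p.2
        have hxU : xbar + t • w' ∈ U := by
          apply hball
          simp only [Metric.mem_ball, dist_eq_norm, add_sub_cancel_left]
          rw [norm_smul, Real.norm_eq_abs, abs_of_pos ht]
          calc t * ‖w'‖ ≤ t * (‖w‖ + 1) := by nlinarith
            _ < ε := by
              rw [← lt_div_iff₀ (by positivity)] at *
              exact htε
        rw [zero_dotProduct, mul_zero, EReal.coe_zero, sub_zero]
        rcases lt_or_ge (f (xbar + t • w')) ⊤ with hfx | hfx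
        · have hle := hmin _ hxU hfx
          have hfxb : f (xbar + t • w') ≠ ⊥ := hproper.2 _
          set a : ℝ := (f (xbar + t • w')).toReal with hadef
          have ha : f (xbar + t • w') = (a : EReal) := (EReal.coe_toReal (ne_of_lt hfx) hfxb).symm
          have hnorm : ‖xbar + t • w' - xbar‖ = t * ‖w'‖ := by
            rw [add_sub_cancel_left, norm_smul, Real.norm_eq_abs, abs_of_pos ht]
          rw [hnorm, hb, ha, ← EReal.coe_add, EReal.coe_le_coe_iff] at hle
          rw [ha, hb, ← EReal.coe_sub, ← EReal.coe_mul, EReal.coe_le_coe_iff]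
          have ht2 : (0:ℝ) < t ^ 2 := by positivity
          have hab : γ * (t * ‖w'‖) ^ 2 ≤ a - b := by linarith
          have : c ≤ 2 / t ^ 2 * (γ * (t * ‖w'‖) ^ 2) := by
            rw [mul_pow, hcdef]
            rw [div_mul_eq_mul_div, le_div_iff₀ ht2]
            have hw'2 : ‖w‖ ^ 2 / 4 ≤ ‖w'‖ ^ 2 := by nlinarith
            nlinarith [mul_nonneg (mul_nonneg hγ.le ht2.le)
              (by linarith : (0:ℝ) ≤ ‖w'‖ ^ 2 - ‖w‖ ^ 2 / 4)]
          calc c ≤ 2 / t ^ 2 * (γ * (t * ‖w'‖) ^ 2) := this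
            _ ≤ 2 / t ^ 2 * (a - b) := by
              apply mul_le_mul_of_nonneg_left hab (by positivity)
        · have hfx' : f (xbar + t • w') = ⊤ := top_le_iff.mp hfx
          rw [hfx', hb, EReal.top_sub_coe]
          rw [EReal.coe_mul_top_of_pos (by positivity)]
          exact le_top
      calc (0 : EReal) < ((c : ℝ) : EReal) := by exact_mod_cast hc
        _ ≤ _ := Filter.le_liminf_of_le (by isBoundedDefault) key
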